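/- For all natural numbers n ≥ 1 and m with m ≤ n, the classical Stirling numbers of the second kind satisfy S(n,m) = (1/m!) · Σ_{j=0}^{n-1} E(n,j) · C(j, n−m), where E(n,j) are the Eulerian numbers and C(j, n−m) is the ordinary binomial coefficient. -/

import Mathlib

open Finset

/-- The classical Stirling numbers of the second kind, defined by the recurrence
`S(n+1,k) = S(n,k-1) + k·S(n,k)`, with `S(0,0) = 1`, `S(n,0) = 0` for `n ≥ 1`,
and `S(n,k) = 0` for `k > n`. -/
def stirling2 : ℕ → ℕ → ℕ
  | 0, 0 => 1
  | 0, _ + 1 => 0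
  | _ + 1, 0 => 0
  | n + 1, k + 1 => stirling2 n k + (k + 1) * stirling2 n (k + 1)

/-- The Eulerian numbers `E(n,k) = ∑_{j=0}^k (-1)^j C(n+1,j) (k+1-j)^n`. -/
def eulerianNum (n k : ℕ) : ℤ :=
  ∑ j ∈ Finset.range (k + 1), (-1 : ℤ) ^ j * ((n + 1).choose j : ℤ) * ((k + 1 - j : ℕ) : ℤ) ^ n

/-!
Both sides are the `m`-th forward difference at `0` of `x ↦ x ^ n` on `ℕ`. For the left side,
`x ^ n = ∑ₖ S(n,k) k! C(x,k)` and `Δᵐ C(·,k) 0 = [k = m]`. For the right side, Worpitzky's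
identity `x ^ n = ∑ⱼ E(n,j) C(x+j,n)` and `Δᵐ C(· + j,n) 0 = C(j,n-m)`. Worpitzky's identity
follows by induction on `n` from the recurrence `E(n+1,k+1) = (k+2) E(n,k+1) + (n-k) E(n,k)`
and from `E(n,n) = 0`, which holds because `E(n,n)` is, up to sign, the `(n+1)`-th difference
of `x ↦ x ^ n`.
-/

open scoped Nat

theorem stirling2_eq_stirlingSecond : ∀ n k, stirling2 n k = Nat.stirlingSecond n k
  | 0, 0 | 0, _ + 1 | _ + 1, 0 => rfl
  | n + 1, k + 1 => by
    rw [stirling2, Nat.stirlingSecond_succ_succ, stirling2_eq_stirlingSecond n k,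
      stirling2_eq_stirlingSecond n (k + 1), add_comm]

theorem Nat.mul_descFactorial (x k : ℕ) :
    x * x.descFactorial k = x.descFactorial (k + 1) + k * x.descFactorial k := by
  rcases le_or_gt k x with hk | hk
  · rw [descFactorial_succ]
    nth_rw 1 [← Nat.sub_add_cancel hk]
    ring
  · simp [descFactorial_of_lt hk]

theorem Nat.pow_eq_sum_stirlingSecond_mul_descFactorial (x n : ℕ) :
    x ^ n = ∑ k ∈ range (n + 1), stirlingSecond n k * x.descFactorial k := by
  induction n with
  | zero => simp
  | succ n ih =>
    set g : ℕ → ℕ := fun k ↦ k * stirlingSecond n k * x.descFactorial k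
    have hg : ∑ k ∈ range (n + 1), g k = ∑ k ∈ range (n + 1), g (k + 1) := by
      have h := sum_range_succ' g (n + 1)
      rwa [sum_range_succ, show g (n + 1) = 0 by simp [g, stirlingSecond_eq_zero_of_lt],
        show g 0 = 0 by simp [g], add_zero, add_zero] at h
    rw [sum_range_succ', stirlingSecond_succ_zero, zero_mul, add_zero, pow_succ', ih, mul_sum]
    calc ∑ k ∈ range (n + 1), x * (stirlingSecond n k * x.descFactorial k)
        = ∑ k ∈ range (n + 1), (stirlingSecond n k * x.descFactorial (k + 1) + g k) :=
          sum_congr rfl fun k _ ↦ by rw [mul_left_comm, mul_descFactorial]; ring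
      _ = ∑ k ∈ range (n + 1), (stirlingSecond n k * x.descFactorial (k + 1) + g (k + 1)) := by
          rw [sum_add_distrib, sum_add_distrib, hg]
      _ = _ := sum_congr rfl fun k _ ↦ by rw [stirlingSecond_succ_succ]; ring

theorem fwdDiff_iter_sum_mul {M R ι : Type*} [AddCommMonoid M] [Ring R] (h : M) (s : Finset ι)
    (c : ι → R) (f : ι → M → R) (m : ℕ) (y : M) :
    (fwdDiff h)^[m] (fun x ↦ ∑ i ∈ s, c i * f i x) y
      = ∑ i ∈ s, c i * (fwdDiff h)^[m] (f i) y := by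
  have hfun : (fun x ↦ ∑ i ∈ s, c i * f i x) = ∑ i ∈ s, c i • f i := by
    ext x; simp
  simp [hfun]

theorem fwdDiff_iter_pow_eq_factorial_mul_stirlingSecond (n m : ℕ) :
    (fwdDiff 1)^[m] (fun x : ℕ ↦ (x : ℤ) ^ n) 0 = m ! * Nat.stirlingSecond n m := by
  have hexp : (fun x : ℕ ↦ (x : ℤ) ^ n) =
      fun x ↦ ∑ k ∈ range (n + 1), (Nat.stirlingSecond n k * k ! : ℤ) * x.choose k := by
    ext x
    exact_mod_cast (Nat.pow_eq_sum_stirlingSecond_mul_descFactorial x n).trans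
      (sum_congr rfl fun k _ ↦ by rw [Nat.descFactorial_eq_factorial_mul_choose, mul_assoc])
  simp only [hexp, fwdDiff_iter_sum_mul, fwdDiff_iter_choose_zero, mul_ite, mul_one, mul_zero,
    sum_ite_eq, mem_range]
  split_ifs with hm
  · ring
  · simp [Nat.stirlingSecond_eq_zero_of_lt (by omega : n < m)]

theorem fwdDiff_iter_choose_add_zero {m n : ℕ} (j : ℕ) (h : m ≤ n) :
    (fwdDiff 1)^[m] (fun x : ℕ ↦ ((x + j).choose n : ℤ)) 0 = j.choose (n - m) := by
  obtain ⟨r, rfl⟩ := Nat.exists_eq_add_of_le h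
  rw [fwdDiff_iter_comp_add (f := fun x : ℕ ↦ (x.choose (m + r) : ℤ)), fwdDiff_iter_choose,
    zero_add, Nat.add_sub_cancel_left]

theorem Nat.cast_succ_choose_mul {R : Type*} [CommRing R] (n k : ℕ) :
    ((n + 1).choose k : R) * ((n : R) + 1 - k) = (n + 1) * n.choose k := by
  rcases le_or_gt k (n + 1) with hk | hk
  · have h := congrArg (Nat.cast : ℕ → R) (Nat.choose_mul_succ_eq n k)
    push_cast [Nat.cast_sub hk] at h
    linear_combination -h
  · simp [Nat.choose_eq_zero_of_lt hk, Nat.choose_eq_zero_of_lt (by omega : n < k)]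

/-- Decoupling the binomial row `N` from the exponent `p` in `eulerianNum` lets Pascal's rule and
absorption act on them one at a time. -/
def eulerianSum (N p k : ℕ) : ℤ :=
  ∑ j ∈ range (k + 1), (-1) ^ j * (N.choose j : ℤ) * ((k : ℤ) + 1 - j) ^ p

theorem eulerianNum_eq_eulerianSum (n k : ℕ) : eulerianNum n k = eulerianSum (n + 1) n k :=
  sum_congr rfl fun j hj ↦ by
    rw [Nat.cast_sub (by rw [mem_range] at hj; omega)]
    push_cast
    ring

theorem eulerianSum_succ_succ (N p k : ℕ) :
    eulerianSum (N + 1) p (k + 1) = eulerianSum N p (k + 1) - eulerianSum N p k := by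
  unfold eulerianSum
  conv_lhs => rw [sum_range_succ']
  conv_rhs => rw [sum_range_succ']
  rw [add_sub_right_comm _ _ (∑ j ∈ range (k + 1), _), ← sum_sub_distrib]
  congr 1
  · refine sum_congr rfl fun j _ ↦ ?_
    rw [Nat.choose_succ_succ]
    push_cast
    ring
  · simp

theorem eulerianSum_succ_pow_succ (N p k : ℕ) :
    eulerianSum (N + 1) (p + 1) k
      = ((k : ℤ) - N) * eulerianSum (N + 1) p k + (N + 1) * eulerianSum N p k := by
  simp only [eulerianSum, mul_sum, ← sum_add_distrib]
  refine sum_congr rfl fun j _ ↦ ?_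
  linear_combination (-1) ^ j * ((k : ℤ) + 1 - j) ^ p * Nat.cast_succ_choose_mul (R := ℤ) N j

theorem eulerianNum_succ_succ (n k : ℕ) :
    eulerianNum (n + 1) (k + 1)
      = ((k : ℤ) + 2) * eulerianNum n (k + 1) + ((n : ℤ) - k) * eulerianNum n k := by
  simp only [eulerianNum_eq_eulerianSum]
  rw [eulerianSum_succ_succ, eulerianSum_succ_pow_succ, eulerianSum_succ_pow_succ]
  push_cast
  linear_combination (-(n : ℤ) - 1) * eulerianSum_succ_succ n n k

theorem eulerianNum_zero_right (n : ℕ) : eulerianNum n 0 = 1 := by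
  simp [eulerianNum]

theorem eulerianNum_self {n : ℕ} (hn : n ≠ 0) : eulerianNum n n = 0 := by
  set f : ℕ → ℤ := fun j ↦ (-1) ^ j * (n + 1).choose j * ((n + 1 - j : ℕ) : ℤ) ^ n
  calc eulerianNum n n = ∑ j ∈ range (n + 2), f j := by
        rw [sum_range_succ, show f (n + 1) = 0 by simp [f, hn], add_zero]; rfl
    _ = ∑ j ∈ range (n + 2), f (n + 2 - 1 - j) := (sum_range_reflect f _).symm
    _ = (fwdDiff 1)^[n + 1] (fun r : ℤ ↦ r ^ n) 0 := by
        rw [fwdDiff_iter_eq_sum_shift]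
        refine sum_congr rfl fun j hj ↦ ?_
        have hj : j ≤ n + 1 := by rw [mem_range] at hj; omega
        simp only [f]
        rw [show n + 2 - 1 - j = n + 1 - j by omega, Nat.sub_sub_self hj, Nat.choose_symm hj]
        simp
    _ = 0 := by rw [fwdDiff_iter_pow_eq_zero_of_lt (lt_add_one n)]; rfl

theorem Nat.cast_mul_choose_add (x j n : ℕ) :
    (x : ℤ) * ((x + j).choose n : ℤ)
      = ((n : ℤ) - j) * ((x + j + 1).choose (n + 1) : ℤ)
        + ((j : ℤ) + 1) * ((x + j).choose (n + 1) : ℤ) := by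
  have h1 := congrArg (Nat.cast : ℕ → ℤ) (Nat.add_one_mul_choose_eq (x + j) n)
  have h2 := congrArg (Nat.cast : ℕ → ℤ) (Nat.choose_succ_succ (x + j) n)
  push_cast at h1 h2
  refine mul_left_cancel₀ (by positivity : (n : ℤ) + 1 ≠ 0) ?_
  linear_combination ((n : ℤ) + 1) * h1 + ((n : ℤ) + 1) * ((j : ℤ) + 1) * h2

theorem pow_eq_sum_eulerianNum_mul_choose {n : ℕ} (hn : 1 ≤ n) (x : ℕ) :
    (x : ℤ) ^ n = ∑ j ∈ range n, eulerianNum n j * ((x + j).choose n : ℤ) := by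
  induction n, hn using Nat.le_induction with
  | base => simp [eulerianNum]
  | succ n hn ih =>
    set g : ℕ → ℤ := fun j ↦ ((j : ℤ) + 1) * eulerianNum n j * (x + j).choose (n + 1)
    have hg : ∑ j ∈ range n, g j = ∑ j ∈ range n, g (j + 1) + g 0 := by
      rw [← sum_range_succ', sum_range_succ,
        show g n = 0 by simp [g, eulerianNum_self (by omega : n ≠ 0)], add_zero]
    calc (x : ℤ) ^ (n + 1)
        = ∑ j ∈ range n, eulerianNum n j * ((x : ℤ) * ((x + j).choose n : ℤ)) := by
          rw [pow_succ', ih, mul_sum]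
          exact sum_congr rfl fun j _ ↦ by ring
      _ = ∑ j ∈ range n,
            (((n : ℤ) - j) * eulerianNum n j * ((x + j + 1).choose (n + 1) : ℤ) + g j) :=
          sum_congr rfl fun j _ ↦ by rw [Nat.cast_mul_choose_add]; ring
      _ = ∑ j ∈ range n,
            (((n : ℤ) - j) * eulerianNum n j * ((x + j + 1).choose (n + 1) : ℤ) + g (j + 1))
            + g 0 := by
          rw [sum_add_distrib, sum_add_distrib, hg, add_assoc]
      _ = ∑ j ∈ range n, eulerianNum (n + 1) (j + 1) * ((x + (j + 1)).choose (n + 1) : ℤ)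
            + eulerianNum (n + 1) 0 * ((x + 0).choose (n + 1) : ℤ) := by
          congr 1
          · refine sum_congr rfl fun j _ ↦ ?_
            simp only [g, eulerianNum_succ_succ, ← add_assoc x]
            push_cast
            ring
          · simp [g, eulerianNum_zero_right]
      _ = _ :=
          (sum_range_succ' (fun j ↦ eulerianNum (n + 1) j * (x + j).choose (n + 1)) n).symm

theorem stirling2_eq_sum_eulerian (n m : ℕ) (hn : 1 ≤ n) (hm : m ≤ n) :
    (stirling2 n m : ℚ) =
      (1 / (m.factorial : ℚ)) *
        ∑ j ∈ Finset.range n, (eulerianNum n j : ℚ) * (j.choose (n - m) : ℚ) := by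
  have h : (m ! : ℤ) * Nat.stirlingSecond n m
      = ∑ j ∈ range n, eulerianNum n j * (j.choose (n - m) : ℤ) := by
    rw [← fwdDiff_iter_pow_eq_factorial_mul_stirlingSecond,
      funext (pow_eq_sum_eulerianNum_mul_choose hn), fwdDiff_iter_sum_mul]
    exact sum_congr rfl fun j _ ↦ by rw [fwdDiff_iter_choose_add_zero j hm]
  rw [stirling2_eq_stirlingSecond, one_div, eq_inv_mul_iff_mul_eq₀ (by positivity)]
  exact_mod_cast h
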